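/- For any finite MDP and atomic propositions q, r, the set of states satisfying ⟨Positive⟩(q W r) equals the union of the set of states satisfying ⟨Positive⟩(q U r) and the set of states satisfying ⟨Positive⟩(q U ⟨Almost⟩(□ q)). -/

import Mathlib

/-!
A play satisfying `□ q` satisfies `q U r` or `□ (q ∧ ¬ r)`, so `⟨Positive⟩(q W r)` is equivalent
to `⟨Positive⟩(q U r) ∨ ⟨Positive⟩(□ q)`, and it remains to show
`⟨Positive⟩(□ q) ≡ ⟨Positive⟩(q U ⟨Almost⟩(□ q))`.

Backwards, follow a positive-probability path through `q` to a state where `□ q` holds almost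
surely, prepending its moves one at a time to a strategy that wins `□ q` with positive
probability. Forwards, let `V` be the limit of value iteration for `□ q`: it bounds the
probability of `□ q` under every strategy and satisfies the Bellman equation. If `V s > 0` but
`s` violates `⟨Positive⟩(q U ⟨Almost⟩(□ q))`, then among the violating states those of maximal
value form a trap inside `q` in which a `V`-optimal strategy keeps the play forever, so they
satisfy `⟨Almost⟩(□ q)`, a contradiction.
-/

open Classical

structure MDP (S A : Type) [Fintype S] where
  isP1 : S → Prop
  Av : S → Finset A
  avNe : ∀ s, isP1 s → (Av s).Nonempty
  δ1 : S → A → S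
  δP : S → S → ℝ
  δP_nonneg : ∀ s t, 0 ≤ δP s t
  δP_sum : ∀ s, ¬ isP1 s → ∑ t, δP s t = 1

variable {S A : Type} [Fintype S]

structure Strat (M : MDP S A) where
  act : S → List S → A
  mem : ∀ s h, act s h ∈ M.Av s

noncomputable def nextD (M : MDP S A) (σ : Strat M) (h : List S) (s t : S) : ℝ :=
  if M.isP1 s then (if t = M.δ1 s (σ.act s h) then 1 else 0) else M.δP s t

noncomputable def prU (M : MDP S A) (q r : S → Prop) (σ : Strat M) :
    ℕ → List S → S → ℝ
  | 0, _, s => if r s then 1 else 0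
  | n+1, h, s =>
      if r s then 1 else
      if q s then ∑ t, nextD M σ h s t * prU M q r σ n (s :: h) t else 0

noncomputable def prSafe (M : MDP S A) (q : S → Prop) (σ : Strat M) :
    ℕ → List S → S → ℝ
  | 0, _, s => if q s then 1 else 0
  | n+1, h, s =>
      if q s then ∑ t, nextD M σ h s t * prSafe M q σ n (s :: h) t else 0

/-- Probability that the play from `s` under `σ` satisfies `q U r`. -/
noncomputable def PrUntil (M : MDP S A) (q r : S → Prop) (σ : Strat M) (s : S) : ℝ :=
  ⨆ n, prU M q r σ n [] s

/-- Probability that the play from `s` under `σ` satisfies `□ q`. -/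
noncomputable def PrGlob (M : MDP S A) (q : S → Prop) (σ : Strat M) (s : S) : ℝ :=
  ⨅ n, prSafe M q σ n [] s

/-- Probability of the weak until `q W r ≡ (q U r) ∨ □ q`. -/
noncomputable def PrWeakUntil (M : MDP S A) (q r : S → Prop) (σ : Strat M) (s : S) : ℝ :=
  PrUntil M q r σ s + PrGlob M (fun t => q t ∧ ¬ r t) σ s

/-- `s ⊨ ⟨Positive⟩(q W r)` (weak until `q W r ≡ (q U r) ∨ □ q`). -/
def PositiveWeakUntil (M : MDP S A) (q r : S → Prop) (s : S) : Prop :=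
  ∃ σ : Strat M, 0 < PrWeakUntil M q r σ s

/-- `s ⊨ ⟨Positive⟩(q U ψ)` for a state-set target `ψ`. -/
def PositiveUntil (M : MDP S A) (q ψ : S → Prop) (s : S) : Prop :=
  ∃ σ : Strat M, 0 < PrUntil M q ψ σ s

/-- `s ⊨ ⟨Almost⟩(□ q)`. -/
def AlmostGlob (M : MDP S A) (q : S → Prop) (s : S) : Prop :=
  ∃ σ : Strat M, PrGlob M q σ s = 1

open Filter Topology

section Kernel

variable {M : MDP S A}

lemma nextD_nonneg (σ : Strat M) (h : List S) (s t : S) : 0 ≤ nextD M σ h s t := by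
  unfold nextD
  split_ifs
  · exact zero_le_one
  · exact le_rfl
  · exact M.δP_nonneg s t

lemma sum_nextD_mul (σ : Strat M) (h : List S) (s : S) (w : S → ℝ) :
    ∑ t, nextD M σ h s t * w t =
      if M.isP1 s then w (M.δ1 s (σ.act s h)) else ∑ t, M.δP s t * w t := by
  unfold nextD
  split_ifs <;> simp

lemma sum_nextD (σ : Strat M) (h : List S) (s : S) : ∑ t, nextD M σ h s t = 1 := by
  have := sum_nextD_mul σ h s 1
  by_cases hP : M.isP1 s <;> simp_all [M.δP_sum s]

lemma nextD_le_one (σ : Strat M) (h : List S) (s t : S) : nextD M σ h s t ≤ 1 :=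
  sum_nextD σ h s ▸
    Finset.single_le_sum (fun t _ => nextD_nonneg σ h s t) (Finset.mem_univ t)

lemma sum_nextD_mul_mem_Icc (σ : Strat M) (h : List S) (s : S) {w : S → ℝ}
    (hw : ∀ t, w t ∈ Set.Icc 0 1) : ∑ t, nextD M σ h s t * w t ∈ Set.Icc (0 : ℝ) 1 :=
  ⟨Finset.sum_nonneg fun t _ => mul_nonneg (nextD_nonneg σ h s t) (hw t).1,
    (Finset.sum_le_sum fun t _ => mul_le_of_le_one_right (nextD_nonneg σ h s t) (hw t).2).trans_eq
      (sum_nextD σ h s)⟩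

end Kernel

section StepBounded

variable {M : MDP S A} (q r : S → Prop) (σ : Strat M)

lemma prU_mem_Icc : ∀ n h s, prU M q r σ n h s ∈ Set.Icc (0 : ℝ) 1
  | 0, _, s => by rw [prU]; split_ifs <;> simp
  | n + 1, h, s => by
    rw [prU]
    split_ifs
    · simp
    · exact sum_nextD_mul_mem_Icc σ h s fun t => prU_mem_Icc n (s :: h) t
    · simp

lemma prSafe_mem_Icc : ∀ n h s, prSafe M q σ n h s ∈ Set.Icc (0 : ℝ) 1
  | 0, _, s => by rw [prSafe]; split_ifs <;> simp
  | n + 1, h, s => by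
    rw [prSafe]
    split_ifs
    · exact sum_nextD_mul_mem_Icc σ h s fun t => prSafe_mem_Icc n (s :: h) t
    · simp

lemma prSafe_mono {q₁ q₂ : S → Prop} (hq : ∀ s, q₁ s → q₂ s) :
    ∀ n h s, prSafe M q₁ σ n h s ≤ prSafe M q₂ σ n h s
  | 0, _, s => by
    simp only [prSafe]
    split_ifs with h₁ h₂
    · exact le_rfl
    · exact absurd (hq s h₁) h₂
    · exact zero_le_one
    · exact le_rfl
  | n + 1, h, s => by
    simp only [prSafe]
    split_ifs with h₁ h₂
    · gcongr with t
      · exact nextD_nonneg σ h s t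
      · exact prSafe_mono hq n (s :: h) t
    · exact absurd (hq s h₁) h₂
    · exact (sum_nextD_mul_mem_Icc σ h s fun t => prSafe_mem_Icc q₂ σ n (s :: h) t).1
    · exact le_rfl

/-- Step-bounded form of `□ q ⊆ (q U r) ∨ □ (q ∧ ¬ r)`. -/
lemma prSafe_le_prU_add : ∀ n h s,
    prSafe M q σ n h s ≤ prU M q r σ n h s + prSafe M (fun t => q t ∧ ¬ r t) σ n h s
  | 0, _, s => by
    simp only [prSafe, prU]
    by_cases hr : r s <;> by_cases hq : q s <;> simp [hr, hq]
  | n + 1, h, s => by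
    by_cases hr : r s
    · rw [prU, if_pos hr]
      linarith [(prSafe_mem_Icc q σ (n + 1) h s).2,
        (prSafe_mem_Icc (fun t => q t ∧ ¬ r t) σ (n + 1) h s).1]
    by_cases hq : q s
    · simp only [prSafe, prU, hr, hq, not_false_eq_true, and_self, if_true, if_false]
      rw [← Finset.sum_add_distrib]
      gcongr with t
      rw [← mul_add]
      exact mul_le_mul_of_nonneg_left (prSafe_le_prU_add n (s :: h) t) (nextD_nonneg σ h s t)
    · simp [prSafe, prU, hr, hq]

end StepBounded

section Limits

variable {M : MDP S A} {q r : S → Prop} {σ : Strat M} {s : S}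

lemma prU_le_PrUntil (n : ℕ) : prU M q r σ n [] s ≤ PrUntil M q r σ s :=
  le_ciSup ⟨1, Set.forall_mem_range.2 fun m => (prU_mem_Icc q r σ m [] s).2⟩ n

lemma PrUntil_pos_iff : 0 < PrUntil M q r σ s ↔ ∃ n, 0 < prU M q r σ n [] s := by
  refine ⟨fun h => ?_, fun ⟨n, hn⟩ => hn.trans_le (prU_le_PrUntil n)⟩
  by_contra! hle
  exact h.not_ge (ciSup_le hle)

lemma le_PrGlob_iff {c : ℝ} : c ≤ PrGlob M q σ s ↔ ∀ n, c ≤ prSafe M q σ n [] s :=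
  le_ciInf_iff ⟨0, Set.forall_mem_range.2 fun m => (prSafe_mem_Icc q σ m [] s).1⟩

lemma PrGlob_le_prSafe (n : ℕ) : PrGlob M q σ s ≤ prSafe M q σ n [] s :=
  le_PrGlob_iff.1 le_rfl n

lemma PrGlob_nonneg : 0 ≤ PrGlob M q σ s :=
  le_PrGlob_iff.2 fun n => (prSafe_mem_Icc q σ n [] s).1

lemma PrGlob_le_one : PrGlob M q σ s ≤ 1 :=
  (PrGlob_le_prSafe 0).trans (prSafe_mem_Icc q σ 0 [] s).2

lemma PrGlob_mono {q' : S → Prop} (hq : ∀ t, q t → q' t) :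
    PrGlob M q σ s ≤ PrGlob M q' σ s :=
  le_PrGlob_iff.2 fun n => PrGlob_le_prSafe n |>.trans (prSafe_mono σ hq n [] s)

lemma PrGlob_le_PrWeakUntil : PrGlob M q σ s ≤ PrWeakUntil M q r σ s := by
  have h : PrGlob M q σ s - PrUntil M q r σ s ≤ PrGlob M (fun t => q t ∧ ¬ r t) σ s :=
    le_PrGlob_iff.2 fun n => by
      have hG : PrGlob M q σ s ≤ prSafe M q σ n [] s := PrGlob_le_prSafe n
      have hU : prU M q r σ n [] s ≤ PrUntil M q r σ s := prU_le_PrUntil n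
      linarith [prSafe_le_prU_add q r σ n [] s]
  unfold PrWeakUntil
  linarith

end Limits

/-- Play `σ₀`, as if after the history `h₀`, for the first move and `σ` on the rest of the play. -/
def Strat.stepThen {M : MDP S A} (σ₀ : Strat M) (h₀ : List S) (σ : Strat M) : Strat M where
  act s h := if h = [] then σ₀.act s h₀ else σ.act s h.dropLast
  mem s h := by
    split_ifs
    · exact σ₀.mem s h₀
    · exact σ.mem s _

section StepThen

variable {M : MDP S A} (q r : S → Prop) (σ₀ : Strat M) (h₀ : List S) (σ : Strat M)

lemma nextD_stepThen_nil (s t : S) :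
    nextD M (σ₀.stepThen h₀ σ) [] s t = nextD M σ₀ h₀ s t := by
  simp [nextD, Strat.stepThen]

lemma nextD_stepThen_append (u : S) (h : List S) (s t : S) :
    nextD M (σ₀.stepThen h₀ σ) (h ++ [u]) s t = nextD M σ h s t := by
  simp [nextD, Strat.stepThen]

lemma prU_stepThen_append (u : S) :
    ∀ n h s, prU M q r (σ₀.stepThen h₀ σ) n (h ++ [u]) s = prU M q r σ n h s
  | 0, _, _ => rfl
  | n + 1, h, s => by
    simp only [prU, nextD_stepThen_append, ← List.cons_append, prU_stepThen_append u n]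

lemma prSafe_stepThen_append (u : S) :
    ∀ n h s, prSafe M q (σ₀.stepThen h₀ σ) n (h ++ [u]) s = prSafe M q σ n h s
  | 0, _, _ => rfl
  | n + 1, h, s => by
    simp only [prSafe, nextD_stepThen_append, ← List.cons_append, prSafe_stepThen_append u n]

lemma prU_stepThen_succ (n : ℕ) (u : S) :
    prU M q r (σ₀.stepThen h₀ σ) (n + 1) [] u =
      if r u then 1 else
      if q u then ∑ t, nextD M σ₀ h₀ u t * prU M q r σ n [] t else 0 := by
  have hshift := prU_stepThen_append q r σ₀ h₀ σ u n []
  simp only [List.nil_append] at hshift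
  simp only [prU, nextD_stepThen_nil, hshift]

lemma prSafe_stepThen_succ (n : ℕ) (u : S) :
    prSafe M q (σ₀.stepThen h₀ σ) (n + 1) [] u =
      if q u then ∑ t, nextD M σ₀ h₀ u t * prSafe M q σ n [] t else 0 := by
  have hshift := prSafe_stepThen_append q σ₀ h₀ σ u n []
  simp only [List.nil_append] at hshift
  simp only [prSafe, nextD_stepThen_nil, hshift]

end StepThen

/-- `s ⊨ ⟨Positive⟩(□ q)`. -/
def PositiveGlob (M : MDP S A) (q : S → Prop) (s : S) : Prop :=
  ∃ σ : Strat M, 0 < PrGlob M q σ s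

section Positive

variable {M : MDP S A} {q ρ : S → Prop}

lemma PositiveUntil.of_target (σ : Strat M) {u : S} (hu : ρ u) : PositiveUntil M q ρ u :=
  ⟨σ, PrUntil_pos_iff.2 ⟨0, by simp [prU, hu]⟩⟩

lemma PositiveUntil.of_step {σ₀ : Strat M} {h₀ : List S} {u t : S} (hq : q u)
    (hstep : 0 < nextD M σ₀ h₀ u t) (ht : PositiveUntil M q ρ t) :
    PositiveUntil M q ρ u := by
  obtain ⟨σ, hσ⟩ := ht
  obtain ⟨n, hn⟩ := PrUntil_pos_iff.1 hσ
  refine ⟨σ₀.stepThen h₀ σ, PrUntil_pos_iff.2 ⟨n + 1, ?_⟩⟩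
  rw [prU_stepThen_succ]
  by_cases hρ : ρ u
  · simp [hρ]
  rw [if_neg hρ, if_pos hq]
  exact Finset.sum_pos'
    (fun t' _ => mul_nonneg (nextD_nonneg σ₀ h₀ u t') (prU_mem_Icc q ρ σ n [] t').1)
    ⟨t, Finset.mem_univ t, mul_pos hstep hn⟩

lemma PositiveGlob.of_step {σ₀ : Strat M} {h₀ : List S} {u t : S} (hq : q u)
    (hstep : 0 < nextD M σ₀ h₀ u t) (ht : PositiveGlob M q t) : PositiveGlob M q u := by
  obtain ⟨σ, hσ⟩ := ht
  refine ⟨σ₀.stepThen h₀ σ, (mul_pos hstep hσ).trans_le (le_PrGlob_iff.2 ?_)⟩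
  rintro (_ | n)
  · rw [prSafe, if_pos hq]
    exact mul_le_one₀ (nextD_le_one σ₀ h₀ u t) PrGlob_nonneg PrGlob_le_one
  · rw [prSafe_stepThen_succ, if_pos hq]
    calc nextD M σ₀ h₀ u t * PrGlob M q σ t
          ≤ nextD M σ₀ h₀ u t * prSafe M q σ n [] t :=
          mul_le_mul_of_nonneg_left (PrGlob_le_prSafe n) (nextD_nonneg σ₀ h₀ u t)
      _ ≤ ∑ t', nextD M σ₀ h₀ u t' * prSafe M q σ n [] t' :=
          Finset.single_le_sum (f := fun t' => nextD M σ₀ h₀ u t' * prSafe M q σ n [] t')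
            (fun t' _ => mul_nonneg (nextD_nonneg σ₀ h₀ u t') (prSafe_mem_Icc q σ n [] t').1)
            (Finset.mem_univ t)

lemma PositiveUntil.induction {P : S → Prop} (target : ∀ u, ρ u → P u)
    (step : ∀ (σ₀ : Strat M) (h₀ : List S) (u t : S),
      q u → 0 < nextD M σ₀ h₀ u t → P t → P u)
    {s : S} (hs : PositiveUntil M q ρ s) : P s := by
  obtain ⟨σ, hσ⟩ := hs
  obtain ⟨n, hn⟩ := PrUntil_pos_iff.1 hσ
  suffices ∀ n h s, 0 < prU M q ρ σ n h s → P s from this n [] s hn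
  intro n
  induction n with
  | zero =>
    intro h s hpos
    rw [prU] at hpos
    split_ifs at hpos with hρ
    · exact target s hρ
    · exact absurd hpos (lt_irrefl 0)
  | succ n ih =>
    intro h s hpos
    rw [prU] at hpos
    split_ifs at hpos with hρ hq
    · exact target s hρ
    · obtain ⟨t, -, ht⟩ := Finset.exists_lt_of_sum_lt
        (hpos.trans_le' Finset.sum_const_zero.le)
      have hstep : 0 < nextD M σ h s t :=
        pos_of_mul_pos_left ht (prU_mem_Icc q ρ σ n (s :: h) t).1
      exact step σ h s t hq hstep (ih (s :: h) t (pos_of_mul_pos_right ht (nextD_nonneg σ h s t)))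
    · exact absurd hpos (lt_irrefl 0)

lemma PositiveGlob.of_positiveUntil_almostGlob {s : S}
    (hs : PositiveUntil M q (AlmostGlob M q) s) : PositiveGlob M q s :=
  hs.induction (fun _ ⟨σ, hσ⟩ => ⟨σ, hσ ▸ one_pos⟩)
    fun _ _ _ _ hq hstep ht => ht.of_step hq hstep

end Positive

noncomputable def optExpect (M : MDP S A) (w : S → ℝ) (u : S) : ℝ :=
  if hP : M.isP1 u then (M.Av u).sup' (M.avNe u hP) fun a => w (M.δ1 u a)
  else ∑ v, M.δP u v * w v

/-- The Bellman operator of the safety objective `□ q`. -/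
noncomputable def safeStep (M : MDP S A) (q : S → Prop) (w : S → ℝ) : S → ℝ :=
  fun u => if q u then optExpect M w u else 0

noncomputable def safeValue (M : MDP S A) (q : S → Prop) (u : S) : ℝ :=
  ⨅ n, (safeStep M q)^[n] 1 u

section Value

variable {M : MDP S A} {q : S → Prop}

lemma optExpect_mono {w w' : S → ℝ} (hw : w ≤ w') (u : S) :
    optExpect M w u ≤ optExpect M w' u := by
  unfold optExpect
  split_ifs
  · exact Finset.sup'_mono_fun fun a _ => hw _
  · exact Finset.sum_le_sum fun v _ => mul_le_mul_of_nonneg_left (hw v) (M.δP_nonneg u v)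

lemma optExpect_const (c : ℝ) (u : S) : optExpect M (fun _ => c) u = c := by
  unfold optExpect
  split_ifs with hP
  · exact Finset.sup'_const _ c
  · rw [← Finset.sum_mul, M.δP_sum u hP, one_mul]

lemma continuous_optExpect (u : S) : Continuous fun w => optExpect M w u := by
  unfold optExpect
  split_ifs
  · exact Continuous.finset_sup'_apply _ fun a _ => continuous_apply _
  · fun_prop

lemma sum_nextD_mul_le_optExpect (σ : Strat M) (h : List S) (u : S) (w : S → ℝ) :
    ∑ t, nextD M σ h u t * w t ≤ optExpect M w u := by
  rw [sum_nextD_mul, optExpect]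
  split_ifs
  · exact Finset.le_sup' (fun a => w (M.δ1 u a)) (σ.mem u h)
  · exact le_rfl

lemma exists_strat_sum_nextD_mul_eq_optExpect (σ : Strat M) (w : S → ℝ) :
    ∃ τ : Strat M, ∀ h u, ∑ t, nextD M τ h u t * w t = optExpect M w u := by
  have hbest : ∀ u, ∃ a ∈ M.Av u, M.isP1 u → optExpect M w u = w (M.δ1 u a) := by
    intro u
    by_cases hP : M.isP1 u
    · obtain ⟨a, ha, hmax⟩ := Finset.exists_mem_eq_sup' (M.avNe u hP) fun a => w (M.δ1 u a)
      exact ⟨a, ha, fun _ => by rw [optExpect, dif_pos hP, hmax]⟩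
    · exact ⟨σ.act u [], σ.mem u [], fun h => absurd h hP⟩
  choose g hg hopt using hbest
  refine ⟨⟨fun u _ => g u, fun u _ => hg u⟩, fun h u => ?_⟩
  rw [sum_nextD_mul]
  split_ifs with hP
  · exact (hopt u hP).symm
  · rw [optExpect, dif_neg hP]

lemma safeStep_mono : Monotone (safeStep M q) := fun _ _ hw u => by
  unfold safeStep
  split_ifs
  · exact optExpect_mono hw u
  · exact le_rfl

lemma continuous_safeStep : Continuous (safeStep M q) :=
  continuous_pi fun u => by
    unfold safeStep
    split_ifs
    · exact continuous_optExpect u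
    · exact continuous_const

lemma antitone_safeStep_iterate : Antitone fun n => (safeStep M q)^[n] 1 :=
  safeStep_mono.antitone_iterate_of_map_le fun u => by
    simp only [safeStep, Pi.one_apply]
    split_ifs
    · exact (optExpect_const 1 u).le
    · exact zero_le_one

lemma safeStep_iterate_nonneg (n : ℕ) : 0 ≤ (safeStep M q)^[n] 1 := by
  have hfix : safeStep M q 0 = 0 := funext fun u => by
    simp only [safeStep, Pi.zero_apply]
    split_ifs
    · exact optExpect_const 0 u
    · rfl
  calc (0 : S → ℝ) = (safeStep M q)^[n] 0 := (Function.iterate_fixed hfix n).symm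
    _ ≤ (safeStep M q)^[n] 1 := safeStep_mono.iterate n zero_le_one

lemma tendsto_safeStep_iterate :
    Tendsto (fun n => (safeStep M q)^[n] 1) atTop (𝓝 (safeValue M q)) :=
  tendsto_pi_nhds.2 fun u =>
    tendsto_atTop_ciInf (fun _ _ hmn => antitone_safeStep_iterate hmn u)
      ⟨0, Set.forall_mem_range.2 fun n => safeStep_iterate_nonneg n u⟩

lemma safeStep_safeValue : safeStep M q (safeValue M q) = safeValue M q :=
  isFixedPt_of_tendsto_iterate tendsto_safeStep_iterate continuous_safeStep.continuousAt

lemma safeValue_eq_optExpect {u : S} (hq : q u) :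
    safeValue M q u = optExpect M (safeValue M q) u := by
  conv_lhs => rw [← safeStep_safeValue]
  exact if_pos hq

lemma safeValue_eq_zero {u : S} (hq : ¬ q u) : safeValue M q u = 0 := by
  rw [← safeStep_safeValue, safeStep, if_neg hq]

lemma prSafe_le_safeStep_iterate (σ : Strat M) :
    ∀ n h u, prSafe M q σ n h u ≤ (safeStep M q)^[n] 1 u
  | 0, h, u => (prSafe_mem_Icc q σ 0 h u).2
  | n + 1, h, u => by
    rw [prSafe, Function.iterate_succ_apply', safeStep]
    split_ifs
    · calc ∑ t, nextD M σ h u t * prSafe M q σ n (u :: h) t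
          ≤ ∑ t, nextD M σ h u t * (safeStep M q)^[n] 1 t :=
            Finset.sum_le_sum fun t _ => mul_le_mul_of_nonneg_left
              (prSafe_le_safeStep_iterate σ n (u :: h) t) (nextD_nonneg σ h u t)
        _ ≤ optExpect M ((safeStep M q)^[n] 1) u := sum_nextD_mul_le_optExpect σ h u _
    · exact le_rfl

lemma PrGlob_le_safeValue (σ : Strat M) (s : S) : PrGlob M q σ s ≤ safeValue M q s :=
  le_ciInf fun n => (PrGlob_le_prSafe n).trans (prSafe_le_safeStep_iterate σ n [] s)

end Value

lemma eq_of_sum_mul_eq_of_le {ι : Type*} [Fintype ι] {p f : ι → ℝ} {c : ℝ}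
    (hp : ∀ i, 0 ≤ p i) (hp_sum : ∑ i, p i = 1) (hle : ∀ i, 0 < p i → f i ≤ c)
    (havg : ∑ i, p i * f i = c) :
    ∀ i, 0 < p i → f i = c := by
  have hle' : ∀ i ∈ Finset.univ, p i * f i ≤ p i * c := fun i _ => by
    rcases (hp i).eq_or_lt with h0 | hpos
    · simp [← h0]
    · exact mul_le_mul_of_nonneg_left (hle i hpos) (hp i)
  have heq : ∑ i, p i * f i = ∑ i, p i * c := by rw [havg, ← Finset.sum_mul, hp_sum, one_mul]
  exact fun i hi =>
    mul_left_cancel₀ hi.ne' ((Finset.sum_eq_sum_iff_of_le hle').1 heq i (Finset.mem_univ i))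

section Trap

variable {M : MDP S A} {q : S → Prop}

lemma prSafe_eq_one_of_closed {F : Set S} (σ : Strat M) (hqF : ∀ u ∈ F, q u)
    (hF : ∀ u ∈ F, ∀ h t, 0 < nextD M σ h u t → t ∈ F) :
    ∀ n h u, u ∈ F → prSafe M q σ n h u = 1
  | 0, _, u, hu => by rw [prSafe, if_pos (hqF u hu)]
  | n + 1, h, u, hu => by
    rw [prSafe, if_pos (hqF u hu), ← sum_nextD σ h u]
    refine Finset.sum_congr rfl fun t _ => ?_
    rcases (nextD_nonneg σ h u t).eq_or_lt with h0 | hpos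
    · rw [← h0, zero_mul]
    · rw [prSafe_eq_one_of_closed σ hqF hF n (u :: h) t (hF u hu h t hpos), mul_one]

lemma almostGlob_of_closed {F : Set S} (σ : Strat M) (hqF : ∀ u ∈ F, q u)
    (hF : ∀ u ∈ F, ∀ h t, 0 < nextD M σ h u t → t ∈ F) {u : S} (hu : u ∈ F) :
    AlmostGlob M q u :=
  ⟨σ, by simp [PrGlob, prSafe_eq_one_of_closed σ hqF hF _ [] u hu]⟩

/-- Among the bad states (those violating the conclusion), those of maximal value `V` form a trap
under a `V`-optimal strategy: `V` is the average of the successors' values, which are again bad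
(else so would be their predecessor), hence at most the maximum, hence equal to it. -/
lemma PositiveUntil.almostGlob_of_safeValue_pos (σ : Strat M) {s : S}
    (hs : 0 < safeValue M q s) : PositiveUntil M q (AlmostGlob M q) s := by
  set V := safeValue M q
  set Bad : S → Prop := fun u => ¬ PositiveUntil M q (AlmostGlob M q) u
  by_contra hbad
  obtain ⟨u₀, hu₀, hmax⟩ :=
    (Finset.univ.filter Bad).exists_max_image V
      ⟨s, Finset.mem_filter.2 ⟨Finset.mem_univ s, hbad⟩⟩
  simp only [Finset.mem_filter, Finset.mem_univ, true_and] at hu₀ hmax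
  obtain ⟨τ, hτ⟩ := exists_strat_sum_nextD_mul_eq_optExpect σ V
  set F : Set S := {u | Bad u ∧ V u = V u₀}
  have hqF : ∀ u ∈ F, q u := fun u hu => by
    by_contra hq
    exact (hs.trans_le ((hmax s hbad).trans_eq hu.2.symm)).ne' (safeValue_eq_zero hq)
  have hF : ∀ u ∈ F, ∀ h t, 0 < nextD M τ h u t → t ∈ F := by
    intro u hu h
    have hbad_succ : ∀ t, 0 < nextD M τ h u t → Bad t :=
      fun t ht hgood => hu.1 (hgood.of_step (hqF u hu) ht)
    have hval := eq_of_sum_mul_eq_of_le (nextD_nonneg τ h u) (sum_nextD τ h u)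
      (fun t ht => (hmax t (hbad_succ t ht)).trans_eq hu.2.symm)
      ((hτ h u).trans (safeValue_eq_optExpect (hqF u hu)).symm)
    exact fun t ht => ⟨hbad_succ t ht, (hval t ht).trans hu.2⟩
  exact hu₀ (.of_target σ (almostGlob_of_closed τ hqF hF ⟨hu₀, rfl⟩))

end Trap

section Characterization

variable {M : MDP S A} {q r : S → Prop} {s : S}

lemma positiveGlob_iff_positiveUntil_almostGlob :
    PositiveGlob M q s ↔ PositiveUntil M q (AlmostGlob M q) s :=
  ⟨fun ⟨σ, hσ⟩ => .almostGlob_of_safeValue_pos σ (hσ.trans_le (PrGlob_le_safeValue σ s)),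
    .of_positiveUntil_almostGlob⟩

lemma positiveWeakUntil_iff :
    PositiveWeakUntil M q r s ↔ PositiveUntil M q r s ∨ PositiveGlob M q s := by
  constructor
  · rintro ⟨σ, hσ⟩
    by_cases hU : 0 < PrUntil M q r σ s
    · exact .inl ⟨σ, hU⟩
    · have hG : 0 < PrGlob M (fun t => q t ∧ ¬ r t) σ s := by
        unfold PrWeakUntil at hσ
        linarith
      exact .inr ⟨σ, hG.trans_le (PrGlob_mono fun t ht => ht.1)⟩
  · rintro (⟨σ, hσ⟩ | ⟨σ, hσ⟩)
    · exact ⟨σ, add_pos_of_pos_of_nonneg hσ PrGlob_nonneg⟩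
    · exact ⟨σ, hσ.trans_le PrGlob_le_PrWeakUntil⟩

end Characterization

/-- `⟦⟨Positive⟩(q W r)⟧ = ⟦⟨Positive⟩(q U r)⟧ ∪ ⟦⟨Positive⟩(q U ⟨Almost⟩(□ q))⟧`. -/
theorem positive_weak_until_characterization
    (M : MDP S A) (q r : S → Prop) :
    {s : S | PositiveWeakUntil M q r s} =
      {s : S | PositiveUntil M q r s} ∪
      {s : S | PositiveUntil M q (AlmostGlob M q) s} :=
  Set.ext fun _ =>
    positiveWeakUntil_iff.trans (or_congr_right positiveGlob_iff_positiveUntil_almostGlob)
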